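/- There is no 2-2-2-2-2 configuration under the Modified CFLS coloring φ in which exactly four color classes are matchings and the remaining color class is a path. -/

import Mathlib

/-!
Let `{ca, cb}` be the path class. Every other edge shares its colour with exactly one
vertex-disjoint edge, and no colour is used three times; chasing partners through the
complementary triangles forces `de ~ ab` and, after possibly swapping `a` and `b`,
`cd ~ ae`, `ce ~ bd`.

This pattern is impossible for `φ`. Let `p` be the first block where `c` differs from `a`;
since `φ(ca) = φ(cb)` it is also where `c` differs from `b`, and there `a` and `b` agree, so
`a, b` and hence `d, e` first differ at some `q > p`. Let `r` be the first block where `c`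
and `d` (equivalently `a` and `e`) differ. If `r = p` the block pairs of `φ(cd) = φ(ae)`
clash; if `r > p` the ultrametric inequality for first-difference blocks fails on the
triangles `cae`, `cde`; if `r < p` the edges `cd, ae` and `ce, bd` are oriented alike on
block `r`, and on block `q` their indices `i_q` or signs `δ_q` become contradictory.
-/

namespace CFLS

/-- A vertex of `K_n` for `n = 2^(m^2)`: `m` blocks, each a string of `m` bits.
`x k` is the `k`-th block `x^(k+1)`, and `x k j` is its `j`-th bit (most significant first). -/
abbrev Vtx (m : ℕ) := Fin m → Fin m → Bool

/-- The `j`-th bit of a bit string (as a total function of `j : ℕ`). -/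
def bitAt {N : ℕ} (f : Fin N → Bool) (j : ℕ) : Bool :=
  if h : j < N then f ⟨j, h⟩ else false

/-- The value of a bit string read as a binary integer, most significant bit first. -/
def strToNat {N : ℕ} (f : Fin N → Bool) : ℕ :=
  ∑ j : Fin N, if f j then 2 ^ (N - 1 - j.val) else 0

/-- The `k`-th block of a vertex (as a total function of `k : ℕ`). -/
def blockAt {m : ℕ} (x : Vtx m) (k : ℕ) : Fin m → Bool :=
  if h : k < m then x ⟨k, h⟩ else fun _ => false

/-- The least block index at which `x` and `y` differ. -/
noncomputable def firstDiffBlock {m : ℕ} (x y : Vtx m) : ℕ :=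
  sInf {k | blockAt x k ≠ blockAt y k}

/-- The position (1-indexed) of the first bit at which two bit strings differ; `0` if equal. -/
noncomputable def firstDiffIdx {N : ℕ} (f g : Fin N → Bool) : ℕ :=
  if f = g then 0 else sInf {j | bitAt f j ≠ bitAt g j} + 1

/-- The value of a vertex read as a binary integer (concatenation of its blocks). -/
def vtxToNat {m : ℕ} (x : Vtx m) : ℕ :=
  ∑ k : Fin m, strToNat (x k) * (2 ^ m) ^ (m - 1 - k.val)

/-- The colors of the Modified CFLS coloring:
`((i, {x^(i), y^(i)}), i_1, …, i_m, δ_1, …, δ_m)`. -/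
abbrev Color (m : ℕ) := (ℕ × Set (Fin m → Bool)) × (Fin m → ℕ) × (Fin m → ℤ)

/-- The Modified CFLS color of the edge `xy` assuming `x ≤ y` as binary integers. -/
noncomputable def phiAux {m : ℕ} (x y : Vtx m) : Color m :=
  ((firstDiffBlock x y,
      {blockAt x (firstDiffBlock x y), blockAt y (firstDiffBlock x y)}),
   fun k => firstDiffIdx (x k) (y k),
   fun k => if strToNat (x k) ≤ strToNat (y k) then (1 : ℤ) else -1)

/-- The Modified CFLS coloring `φ`. -/
noncomputable def phi {m : ℕ} (x y : Vtx m) : Color m :=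
  if vtxToNat x ≤ vtxToNat y then phiAux x y else phiAux y x

/-- The ten edges among five vertices. -/
def edgeList {m : ℕ} (a b c d e : Vtx m) : List (Vtx m × Vtx m) :=
  [(a,b),(a,c),(a,d),(a,e),(b,c),(b,d),(b,e),(c,d),(c,e),(d,e)]

/-- The number of the ten edges among `a,b,c,d,e` receiving color `col` under `φ`. -/
noncomputable def colorCount {m : ℕ} (a b c d e : Vtx m) (col : Color m) : ℕ :=
  ((edgeList a b c d e).map fun p => phi p.1 p.2).countP fun x =>
    @decide (x = col) (Classical.propDecidable _)

/-- Five pairwise distinct vertices. -/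
def Distinct5 {m : ℕ} (a b c d e : Vtx m) : Prop :=
  a ≠ b ∧ a ≠ c ∧ a ≠ d ∧ a ≠ e ∧ b ≠ c ∧ b ≠ d ∧ b ≠ e ∧ c ≠ d ∧ c ≠ e ∧ d ≠ e

/-- `col` appears on some edge among `a,b,c,d,e`. -/
noncomputable def IsAttained {m : ℕ} (a b c d e : Vtx m) (col : Color m) : Prop :=
  colorCount a b c d e col ≠ 0

/-- A 2-2-2-2-2 configuration: five distinct vertices such that `φ` on the ten edges
among them takes exactly five values, each attained on exactly two edges. -/
def IsConfig22222 {m : ℕ} (a b c d e : Vtx m) : Prop :=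
  Distinct5 a b c d e ∧
  ∀ col : Color m, colorCount a b c d e col = 0 ∨ colorCount a b c d e col = 2

/-- The color class of `col` is a matching: two vertex-disjoint edges of color `col`. -/
def IsMatchingClass {m : ℕ} (a b c d e : Vtx m) (col : Color m) : Prop :=
  ∃ p ∈ edgeList a b c d e, ∃ q ∈ edgeList a b c d e,
    phi p.1 p.2 = col ∧ phi q.1 q.2 = col ∧
    p.1 ≠ q.1 ∧ p.1 ≠ q.2 ∧ p.2 ≠ q.1 ∧ p.2 ≠ q.2

/-- The color class of `col` is a path: two distinct edges of color `col` sharing a vertex. -/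
def IsPathClass {m : ℕ} (a b c d e : Vtx m) (col : Color m) : Prop :=
  ∃ p ∈ edgeList a b c d e, ∃ q ∈ edgeList a b c d e,
    p ≠ q ∧ phi p.1 p.2 = col ∧ phi q.1 q.2 = col ∧
    (p.1 = q.1 ∨ p.1 = q.2 ∨ p.2 = q.1 ∨ p.2 = q.2)

section Digits

theorem sum_mul_pow_rev_eq {B N : ℕ} (d : Fin N → Fin B) :
    ∑ j : Fin N, (d j : ℕ) * B ^ (N - 1 - j.val) = finFunctionFinEquiv (d ∘ Fin.rev) := by
  rw [finFunctionFinEquiv_apply, ← Equiv.sum_comp Fin.revPerm]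
  refine Finset.sum_congr rfl fun j _ => ?_
  simp only [Fin.revPerm_apply, Function.comp_apply, Fin.val_rev]
  congr 2
  omega

theorem sum_mul_pow_rev_injective {B N : ℕ} :
    Function.Injective fun d : Fin N → Fin B => ∑ j : Fin N, (d j : ℕ) * B ^ (N - 1 - j.val) := by
  intro d d' h
  simp only [sum_mul_pow_rev_eq, Fin.val_inj, finFunctionFinEquiv.apply_eq_iff_eq] at h
  funext j
  simpa using congrFun h (Fin.rev j)

theorem sum_mul_pow_rev_lt {B N : ℕ} (d : Fin N → Fin B) :
    ∑ j : Fin N, (d j : ℕ) * B ^ (N - 1 - j.val) < B ^ N := by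
  rw [sum_mul_pow_rev_eq]
  exact Fin.is_lt _

theorem strToNat_eq {N : ℕ} (f : Fin N → Bool) :
    strToNat f =
      ∑ j : Fin N, ((⟨(f j).toNat, Bool.toNat_lt _⟩ : Fin 2) : ℕ) * 2 ^ (N - 1 - j.val) := by
  refine Finset.sum_congr rfl fun j _ => ?_
  cases f j <;> simp

theorem strToNat_lt {N : ℕ} (f : Fin N → Bool) : strToNat f < 2 ^ N := by
  rw [strToNat_eq]
  exact sum_mul_pow_rev_lt _

theorem strToNat_injective {N : ℕ} : Function.Injective (strToNat (N := N)) := by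
  intro f g h
  rw [strToNat_eq, strToNat_eq] at h
  funext j
  have := congrFun (sum_mul_pow_rev_injective h) j
  revert this
  cases f j <;> cases g j <;> simp

theorem vtxToNat_injective {m : ℕ} : Function.Injective (vtxToNat (m := m)) := by
  intro x y h
  have := @sum_mul_pow_rev_injective (2 ^ m) m (fun k => ⟨strToNat (x k), strToNat_lt _⟩)
    (fun k => ⟨strToNat (y k), strToNat_lt _⟩) h
  funext k
  exact strToNat_injective (congrArg Fin.val (congrFun this k))

end Digits

section Phi

variable {m : ℕ}

theorem phi_comm (x y : Vtx m) : phi x y = phi y x := by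
  unfold phi
  split_ifs with h₁ h₂ h₂
  · rw [vtxToNat_injective (le_antisymm h₁ h₂)]
  all_goals first | rfl | omega

theorem phi_eq_phiAux_or (x y : Vtx m) : phi x y = phiAux x y ∨ phi x y = phiAux y x := by
  unfold phi
  split_ifs <;> simp

theorem blockAt_of_lt (x : Vtx m) {k : ℕ} (hk : k < m) : blockAt x k = x ⟨k, hk⟩ := dif_pos hk

theorem blockAt_of_le (x : Vtx m) {k : ℕ} (hk : m ≤ k) : blockAt x k = fun _ => false :=
  dif_neg (by omega)

theorem firstDiffBlock_comm (x y : Vtx m) : firstDiffBlock x y = firstDiffBlock y x := by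
  simp only [firstDiffBlock, ne_comm]

theorem blockAt_firstDiffBlock_ne {x y : Vtx m} (h : x ≠ y) :
    blockAt x (firstDiffBlock x y) ≠ blockAt y (firstDiffBlock x y) := by
  obtain ⟨k, hk⟩ := Function.ne_iff.mp h
  refine Nat.sInf_mem (s := {k | blockAt x k ≠ blockAt y k}) ⟨k, ?_⟩
  simpa [blockAt_of_lt _ k.isLt] using hk

theorem blockAt_eq_of_lt_firstDiffBlock {x y : Vtx m} {k : ℕ} (hk : k < firstDiffBlock x y) :
    blockAt x k = blockAt y k := by
  simpa using Nat.notMem_of_lt_sInf hk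

theorem min_firstDiffBlock_le {x z : Vtx m} (y : Vtx m) (hxz : x ≠ z) :
    min (firstDiffBlock x y) (firstDiffBlock y z) ≤ firstDiffBlock x z := by
  by_contra! h
  exact blockAt_firstDiffBlock_ne hxz <|
    (blockAt_eq_of_lt_firstDiffBlock (lt_of_lt_of_le h (min_le_left _ _))).trans
      (blockAt_eq_of_lt_firstDiffBlock (lt_of_lt_of_le h (min_le_right _ _)))

theorem firstDiffIdx_comm {N : ℕ} (f g : Fin N → Bool) : firstDiffIdx f g = firstDiffIdx g f := by
  have : {j | bitAt f j ≠ bitAt g j} = {j | bitAt g j ≠ bitAt f j} := by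
    ext
    exact ne_comm
  simp only [firstDiffIdx, this, eq_comm (a := f)]

theorem firstDiffIdx_eq_zero_iff {N : ℕ} {f g : Fin N → Bool} : firstDiffIdx f g = 0 ↔ f = g := by
  unfold firstDiffIdx
  split_ifs <;> simp [*]

theorem phi_fst_fst (x y : Vtx m) : (phi x y).1.1 = firstDiffBlock x y := by
  rcases phi_eq_phiAux_or x y with h | h <;> simp [h, phiAux, firstDiffBlock_comm y x]

theorem phi_fst_snd (x y : Vtx m) :
    (phi x y).1.2 = {blockAt x (firstDiffBlock x y), blockAt y (firstDiffBlock x y)} := by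
  rcases phi_eq_phiAux_or x y with h | h <;>
    simp [h, phiAux, firstDiffBlock_comm y x, Set.pair_comm]

theorem phi_snd_fst (x y : Vtx m) : (phi x y).2.1 = fun k => firstDiffIdx (x k) (y k) := by
  rcases phi_eq_phiAux_or x y with h | h <;> simp [h, phiAux, firstDiffIdx_comm (y _)]

variable {x y z w : Vtx m}

theorem firstDiffBlock_eq_of_phi_eq (h : phi x y = phi z w) :
    firstDiffBlock x y = firstDiffBlock z w := by
  rw [← phi_fst_fst, ← phi_fst_fst, h]

theorem pair_eq_of_phi_eq (h : phi x y = phi z w) :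
    ({blockAt x (firstDiffBlock x y), blockAt y (firstDiffBlock x y)} : Set (Fin m → Bool)) =
      {blockAt z (firstDiffBlock x y), blockAt w (firstDiffBlock x y)} := by
  rw [← phi_fst_snd, firstDiffBlock_eq_of_phi_eq h, ← phi_fst_snd, h]

theorem blockAt_eq_iff_of_phi_eq (h : phi x y = phi z w) (k : ℕ) :
    blockAt x k = blockAt y k ↔ blockAt z k = blockAt w k := by
  rcases lt_or_ge k m with hk | hk
  · have := congrFun (congrArg (fun c => c.2.1) h) ⟨k, hk⟩
    simp only [phi_snd_fst] at this
    rw [blockAt_of_lt _ hk, blockAt_of_lt _ hk, blockAt_of_lt _ hk, blockAt_of_lt _ hk,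
      ← firstDiffIdx_eq_zero_iff, this, firstDiffIdx_eq_zero_iff]
  · simp [blockAt_of_le _ hk]

theorem le_iff_of_phiAux_eq (h : phiAux x y = phiAux z w) (k : ℕ) :
    strToNat (blockAt x k) ≤ strToNat (blockAt y k) ↔
      strToNat (blockAt z k) ≤ strToNat (blockAt w k) := by
  rcases lt_or_ge k m with hk | hk
  · have := congrFun (congrArg (fun c => c.2.2) h) ⟨k, hk⟩
    simp only [phiAux] at this
    rw [blockAt_of_lt _ hk, blockAt_of_lt _ hk, blockAt_of_lt _ hk, blockAt_of_lt _ hk]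
    split_ifs at this <;> omega
  · simp [blockAt_of_le _ hk]

/-- `φ` orients each edge by `vtxToNat`, so equal colours determine the signs `δ` only up to
reversing both edges; a block on which the two edges have the same endpoints fixes the
orientation. -/
theorem le_iff_of_phi_eq (h : phi x y = phi z w) {r : ℕ} (hxz : blockAt x r = blockAt z r)
    (hyw : blockAt y r = blockAt w r) (hxy : blockAt x r ≠ blockAt y r) :
    (∀ k, strToNat (blockAt x k) ≤ strToNat (blockAt y k) ↔
      strToNat (blockAt z k) ≤ strToNat (blockAt w k)) ∨
    (∀ k, strToNat (blockAt y k) ≤ strToNat (blockAt x k) ↔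
      strToNat (blockAt w k) ≤ strToNat (blockAt z k)) := by
  have hne : strToNat (blockAt x r) ≠ strToNat (blockAt y r) := strToNat_injective.ne hxy
  rcases phi_eq_phiAux_or x y with hx | hx <;> rcases phi_eq_phiAux_or z w with hz | hz <;>
    rw [hx, hz] at h
  · exact .inl (le_iff_of_phiAux_eq h)
  · have := le_iff_of_phiAux_eq h r
    rw [hxz, hyw] at this hne
    omega
  · have := le_iff_of_phiAux_eq h r
    rw [hxz, hyw] at this hne
    omega
  · exact .inr (le_iff_of_phiAux_eq h)

end Phi

section Pattern

variable {m : ℕ} {a b c d e : Vtx m}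

theorem blockAt_eq_of_phi_eq_phi (h : phi c a = phi c b) (hca : c ≠ a) :
    blockAt a (firstDiffBlock c a) = blockAt b (firstDiffBlock c a) := by
  have := pair_eq_of_phi_eq h
  rw [Set.pair_eq_pair_iff] at this
  rcases this with ⟨-, h⟩ | ⟨-, h⟩
  · exact h
  · exact absurd h.symm (blockAt_firstDiffBlock_ne hca)

theorem firstDiffBlock_lt_of_phi_eq_phi (h : phi c a = phi c b) (hca : c ≠ a) (hab : a ≠ b) :
    firstDiffBlock c a < firstDiffBlock a b := by
  have hle := min_firstDiffBlock_le c hab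
  rw [firstDiffBlock_comm a c, ← firstDiffBlock_eq_of_phi_eq h, min_self] at hle
  refine lt_of_le_of_ne hle fun heq => blockAt_firstDiffBlock_ne hab ?_
  rw [← heq]
  exact blockAt_eq_of_phi_eq_phi h hca

theorem false_of_phi_pattern_of_lt (hab : a ≠ b) (hcd : c ≠ d) (hde : d ≠ e)
    (h₁ : phi c a = phi c b) (h₂ : phi a b = phi d e) (h₃ : phi c d = phi a e)
    (h₄ : phi c e = phi b d) (hpq : firstDiffBlock c a < firstDiffBlock a b)
    (hr : firstDiffBlock c d < firstDiffBlock c a) : False := by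
  set r := firstDiffBlock c d
  set q := firstDiffBlock a b
  have hq : firstDiffBlock d e = q := (firstDiffBlock_eq_of_phi_eq h₂).symm
  have hca : blockAt c r = blockAt a r := blockAt_eq_of_lt_firstDiffBlock hr
  have hcb : blockAt c r = blockAt b r := by
    rw [firstDiffBlock_eq_of_phi_eq h₁] at hr
    exact blockAt_eq_of_lt_firstDiffBlock hr
  have hde_r : blockAt d r = blockAt e r :=
    blockAt_eq_of_lt_firstDiffBlock (hq ▸ hr.trans hpq)
  have hcd_r : blockAt c r ≠ blockAt d r := blockAt_firstDiffBlock_ne hcd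
  have hde_q : blockAt d q ≠ blockAt e q := hq ▸ blockAt_firstDiffBlock_ne hde
  obtain ⟨had, hbe⟩ | ⟨hae, hbd⟩ : (blockAt a q = blockAt d q ∧ blockAt b q = blockAt e q) ∨
      (blockAt a q = blockAt e q ∧ blockAt b q = blockAt d q) :=
    Set.pair_eq_pair_iff.mp (pair_eq_of_phi_eq h₂)
  · -- the signs of `cd ~ ae` and `ce ~ bd` at block `q` order `c`, `a`, `b` inconsistently
    have hab_q : strToNat (blockAt a q) ≠ strToNat (blockAt b q) :=
      strToNat_injective.ne (blockAt_firstDiffBlock_ne hab)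
    have H₃ := le_iff_of_phi_eq h₃ hca hde_r hcd_r
    have H₄ := le_iff_of_phi_eq h₄ hcb hde_r.symm (hde_r ▸ hcd_r)
    rcases H₃ with H₃ | H₃ <;> rcases H₄ with H₄ | H₄ <;>
      have h₃q := H₃ q <;> have h₄q := H₄ q <;> rw [← had, ← hbe] at h₃q h₄q <;> omega
  · have hcd_q := (blockAt_eq_iff_of_phi_eq h₃ q).mpr hae
    have hce_q := (blockAt_eq_iff_of_phi_eq h₄ q).mpr hbd
    exact hde_q (hcd_q.symm.trans hce_q)

theorem false_of_phi_pattern (hab : a ≠ b) (hac : a ≠ c) (hcd : c ≠ d) (hce : c ≠ e)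
    (hde : d ≠ e) (h₁ : phi c a = phi c b) (h₂ : phi a b = phi d e) (h₃ : phi c d = phi a e)
    (h₄ : phi c e = phi b d) : False := by
  have hpq := firstDiffBlock_lt_of_phi_eq_phi h₁ hac.symm hab
  have hq : firstDiffBlock d e = firstDiffBlock a b := (firstDiffBlock_eq_of_phi_eq h₂).symm
  have hr : firstDiffBlock a e = firstDiffBlock c d := (firstDiffBlock_eq_of_phi_eq h₃).symm
  rcases lt_trichotomy (firstDiffBlock c d) (firstDiffBlock c a) with hlt | heq | hgt
  · exact false_of_phi_pattern_of_lt hab hcd hde h₁ h₂ h₃ h₄ hpq hlt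
  · have hpair := pair_eq_of_phi_eq h₃
    rw [Set.pair_eq_pair_iff, heq] at hpair
    rcases hpair with ⟨hca, -⟩ | ⟨hce, hda⟩
    · exact blockAt_firstDiffBlock_ne hac.symm hca
    · have hde_p : blockAt d (firstDiffBlock c a) = blockAt e (firstDiffBlock c a) :=
        blockAt_eq_of_lt_firstDiffBlock (hq ▸ hpq)
      exact (heq ▸ blockAt_firstDiffBlock_ne hcd) (hce.trans hde_p.symm)
  · have h₁' := min_firstDiffBlock_le a hce
    have h₂' := min_firstDiffBlock_le e hac.symm
    have h₃' := min_firstDiffBlock_le d hce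
    rw [hr] at h₁'
    rw [firstDiffBlock_comm e a, hr] at h₂'
    rw [hq] at h₃'
    omega

end Pattern

open Finset

section Coloring

variable {α C : Type*} [DecidableEq α]

def edgesOn (s : Finset α) : Finset (Sym2 α) := {z ∈ s.sym2 | ¬ z.IsDiag}

@[simp]
theorem mk_mem_edgesOn {s : Finset α} {x y : α} :
    s(x, y) ∈ edgesOn s ↔ x ∈ s ∧ y ∈ s ∧ x ≠ y := by
  simp [edgesOn, and_assoc]

theorem card_edgesOn (s : Finset α) : #(edgesOn s) = (#s).choose 2 := by
  rw [edgesOn, sym2_eq_image, Sym2.filter_image_mk_not_isDiag, Sym2.card_image_offDiag]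

variable [DecidableEq C]

/-- The colour pattern of a 2-2-2-2-2 configuration whose path class is `{ca, cb}`. -/
structure IsPathMatchingColoring (χ : Sym2 α → C) (c a b d e : α) : Prop where
  nodup : [c, a, b, d, e].Nodup
  path : χ s(c, a) = χ s(c, b)
  card_le_two : ∀ col, #{z ∈ edgesOn {c, a, b, d, e} | χ z = col} ≤ 2
  exists_disjoint : ∀ z ∈ edgesOn {c, a, b, d, e}, z ≠ s(c, a) → z ≠ s(c, b) →
    ∃ w ∈ edgesOn {c, a, b, d, e}, χ w = χ z ∧ ∀ v ∈ w, v ∉ z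

namespace IsPathMatchingColoring

variable {χ : Sym2 α → C} {c a b d e : α}

theorem false_of_three (h : IsPathMatchingColoring χ c a b d e) {z₁ z₂ z₃ : Sym2 α}
    (h₁ : z₁ ∈ edgesOn {c, a, b, d, e}) (h₂ : z₂ ∈ edgesOn {c, a, b, d, e})
    (h₃ : z₃ ∈ edgesOn {c, a, b, d, e})
    (h₁₂ : z₁ ≠ z₂) (h₁₃ : z₁ ≠ z₃) (h₂₃ : z₂ ≠ z₃) (hχ₂ : χ z₂ = χ z₁) (hχ₃ : χ z₃ = χ z₁) :
    False :=
  (h.card_le_two (χ z₁)).not_gt <| two_lt_card.mpr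
    ⟨z₁, by simp [h₁], z₂, by simp [h₂, hχ₂], z₃, by simp [h₃, hχ₃], h₁₂, h₁₃, h₂₃⟩

theorem partner_mem_triangle (h : IsPathMatchingColoring χ c a b d e) {x y p q r : α}
    (hS : ∀ v ∈ ({c, a, b, d, e} : Finset α), v = x ∨ v = y ∨ v = p ∨ v = q ∨ v = r)
    (hxy : s(x, y) ∈ edgesOn {c, a, b, d, e}) (hca : s(x, y) ≠ s(c, a)) (hcb : s(x, y) ≠ s(c, b)) :
    χ s(x, y) = χ s(p, q) ∨ χ s(x, y) = χ s(p, r) ∨ χ s(x, y) = χ s(q, r) := by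
  obtain ⟨w, hw, hχ, hdisj⟩ := h.exists_disjoint _ hxy hca hcb
  induction w using Sym2.ind with | h u v => ?_
  rw [mk_mem_edgesOn] at hw
  simp only [Sym2.mem_iff, forall_eq_or_imp, forall_eq] at hdisj
  have hu : u = p ∨ u = q ∨ u = r := by have := hS u hw.1; tauto
  have hv : v = p ∨ v = q ∨ v = r := by have := hS v hw.2.1; tauto
  rcases hu with rfl | rfl | rfl <;> rcases hv with rfl | rfl | rfl <;>
    simp_all [Sym2.eq_swap]

theorem distinct (h : IsPathMatchingColoring χ c a b d e) :
    c ≠ a ∧ c ≠ b ∧ c ≠ d ∧ c ≠ e ∧ a ≠ b ∧ a ≠ d ∧ a ≠ e ∧ b ≠ d ∧ b ≠ e ∧ d ≠ e := by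
  have := h.nodup
  simp only [List.nodup_cons, List.mem_cons, List.not_mem_nil, or_false, not_or] at this
  tauto

theorem ab_eq_de (h : IsPathMatchingColoring χ c a b d e) : χ s(a, b) = χ s(d, e) := by
  have := h.distinct
  rcases h.partner_mem_triangle (x := d) (y := e) (p := c) (q := a) (r := b) (by simp)
    (by simp; grind) (by grind [Sym2.eq_iff]) (by grind [Sym2.eq_iff]) with hχ | hχ | hχ
  · refine (h.false_of_three (z₁ := s(c, a)) (z₂ := s(c, b)) (z₃ := s(d, e)) ?_ ?_ ?_ ?_ ?_ ?_
      h.path.symm hχ).elim <;> simp <;> grind [Sym2.eq_iff]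
  · refine (h.false_of_three (z₁ := s(c, a)) (z₂ := s(c, b)) (z₃ := s(d, e)) ?_ ?_ ?_ ?_ ?_ ?_
      h.path.symm (hχ.trans h.path.symm)).elim <;> simp <;> grind [Sym2.eq_iff]
  · exact hχ.symm

theorem cd_eq_ae_or_cd_eq_be (h : IsPathMatchingColoring χ c a b d e) :
    χ s(c, d) = χ s(a, e) ∨ χ s(c, d) = χ s(b, e) := by
  have := h.distinct
  rcases h.partner_mem_triangle (x := c) (y := d) (p := a) (q := b) (r := e) (by simp)
    (by simp; grind) (by grind [Sym2.eq_iff]) (by grind [Sym2.eq_iff]) with hχ | hχ | hχ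
  · refine (h.false_of_three (z₁ := s(a, b)) (z₂ := s(d, e)) (z₃ := s(c, d)) ?_ ?_ ?_ ?_ ?_ ?_
      h.ab_eq_de.symm hχ).elim <;> simp <;> grind [Sym2.eq_iff]
  · exact .inl hχ
  · exact .inr hχ

theorem ce_eq_bd_of_cd_eq_ae (h : IsPathMatchingColoring χ c a b d e)
    (hcd : χ s(c, d) = χ s(a, e)) :
    χ s(c, e) = χ s(b, d) := by
  have := h.distinct
  rcases h.partner_mem_triangle (x := c) (y := e) (p := a) (q := b) (r := d) (by simp)
    (by simp; grind) (by grind [Sym2.eq_iff]) (by grind [Sym2.eq_iff]) with hχ | hχ | hχ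
  · refine (h.false_of_three (z₁ := s(a, b)) (z₂ := s(d, e)) (z₃ := s(c, e)) ?_ ?_ ?_ ?_ ?_ ?_
      h.ab_eq_de.symm hχ).elim <;> simp <;> grind [Sym2.eq_iff]
  · exfalso
    rcases h.partner_mem_triangle (x := b) (y := d) (p := c) (q := a) (r := e) (by simp)
      (by simp; grind) (by grind [Sym2.eq_iff]) (by grind [Sym2.eq_iff]) with hχ' | hχ' | hχ'
    · refine h.false_of_three (z₁ := s(c, a)) (z₂ := s(c, b)) (z₃ := s(b, d)) ?_ ?_ ?_ ?_ ?_ ?_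
        h.path.symm hχ' <;> simp <;> grind [Sym2.eq_iff]
    · refine h.false_of_three (z₁ := s(a, d)) (z₂ := s(c, e)) (z₃ := s(b, d)) ?_ ?_ ?_ ?_ ?_ ?_
        hχ (hχ'.trans hχ) <;> simp <;> grind [Sym2.eq_iff]
    · refine h.false_of_three (z₁ := s(a, e)) (z₂ := s(c, d)) (z₃ := s(b, d)) ?_ ?_ ?_ ?_ ?_ ?_
        hcd hχ' <;> simp <;> grind [Sym2.eq_iff]
  · exact hχ

theorem swap (h : IsPathMatchingColoring χ c a b d e) : IsPathMatchingColoring χ c b a d e := by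
  have hS : ({c, b, a, d, e} : Finset α) = {c, a, b, d, e} := by rw [insert_comm b a]
  have := h.distinct
  refine ⟨?_, h.path.symm, ?_, ?_⟩
  · simp only [List.nodup_cons, List.mem_cons, List.not_mem_nil, or_false, not_or]
    grind
  · simpa only [hS] using h.card_le_two
  · simpa only [hS, and_comm (a := _ ≠ s(c, b))] using
      fun z hz h₁ h₂ => h.exists_disjoint z hz h₂ h₁

theorem shape (h : IsPathMatchingColoring χ c a b d e) :
    (χ s(c, d) = χ s(a, e) ∧ χ s(c, e) = χ s(b, d)) ∨
      (χ s(c, d) = χ s(b, e) ∧ χ s(c, e) = χ s(a, d)) := by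
  rcases h.cd_eq_ae_or_cd_eq_be with hcd | hcd
  · exact .inl ⟨hcd, h.ce_eq_bd_of_cd_eq_ae hcd⟩
  · exact .inr ⟨hcd, h.swap.ce_eq_bd_of_cd_eq_ae hcd⟩

end IsPathMatchingColoring

end Coloring

section Classes

variable {β C : Type*} [DecidableEq C] {E : Finset β} {χ : β → C}

theorem filter_eq_pair_of_card_le_two [DecidableEq β] {z₁ z₂ : β}
    (hcard : #{z ∈ E | χ z = χ z₁} ≤ 2) (h₁ : z₁ ∈ E) (h₂ : z₂ ∈ E) (hne : z₁ ≠ z₂)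
    (hχ : χ z₂ = χ z₁) :
    {z ∈ E | χ z = χ z₁} = {z₁, z₂} :=
  (eq_of_subset_of_card_le (by simp [insert_subset_iff, *]) (by rwa [card_pair hne])).symm

theorem card_filter_mem_eq {M : Finset C} (hM : ∀ col ∈ M, #{z ∈ E | χ z = col} = 2) :
    #{z ∈ E | χ z ∈ M} = 2 * #M := by
  rw [← sum_card_fiberwise_eq_card_filter, sum_const_nat hM, mul_comm]

theorem exists_color_forall_of_card_eq {M : Finset C} (hE : #E = 2 * #M + 2)
    (hcard : ∀ col, #{z ∈ E | χ z = col} = 0 ∨ #{z ∈ E | χ z = col} = 2)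
    (hM : ∀ col ∈ M, #{z ∈ E | χ z = col} = 2) :
    ∃ col ∉ M, (∃ z ∈ E, χ z = col) ∧ ∀ z ∈ E, χ z = col ∨ χ z ∈ M := by
  obtain ⟨z₀, hz₀, hz₀M⟩ : ∃ z ∈ E, χ z ∉ M := by
    by_contra! h
    have := card_filter_eq_iff.mpr h
    rw [card_filter_mem_eq hM] at this
    omega
  have h₀ : #{z ∈ E | χ z = χ z₀} = 2 :=
    (hcard _).resolve_left (card_ne_zero.mpr ⟨z₀, by simp [hz₀]⟩)
  refine ⟨χ z₀, hz₀M, ⟨z₀, hz₀, rfl⟩, fun z hz => ?_⟩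
  have hall : #{z ∈ E | χ z ∈ insert (χ z₀) M} = #E := by
    rw [card_filter_mem_eq (by simpa [h₀] using hM), card_insert_of_notMem hz₀M, hE, mul_add_one]
  simpa using card_filter_eq_iff.mp hall z hz

end Classes

theorem exists_eq_mk_of_mem_of_mem {α : Type*} {v : α} {z₁ z₂ : Sym2 α} (h₁ : v ∈ z₁) (h₂ : v ∈ z₂)
    (hne : z₁ ≠ z₂) : ∃ y y', y ≠ y' ∧ z₁ = s(v, y) ∧ z₂ = s(v, y') :=
  ⟨Sym2.Mem.other h₁, Sym2.Mem.other h₂,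
    fun h => hne (by rw [← Sym2.other_spec h₁, ← Sym2.other_spec h₂, h]),
    (Sym2.other_spec h₁).symm, (Sym2.other_spec h₂).symm⟩

section Classification

variable {α C : Type*} [DecidableEq α] [DecidableEq C]

theorem exists_disjoint_of_mem_filter {E : Finset (Sym2 α)} {χ : Sym2 α → C} {z₁ z₂ z : Sym2 α}
    (hcard : #{w ∈ E | χ w = χ z₁} ≤ 2) (h₁ : z₁ ∈ E) (h₂ : z₂ ∈ E) (hχ : χ z₂ = χ z₁)
    (hdisj : ∀ v ∈ z₁, v ∉ z₂) (hz : z ∈ E) (hzχ : χ z = χ z₁) :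
    ∃ w ∈ E, χ w = χ z ∧ ∀ v ∈ w, v ∉ z := by
  have hne : z₁ ≠ z₂ := fun h => hdisj _ z₁.out_fst_mem (h ▸ z₁.out_fst_mem)
  have hmem : z ∈ {w ∈ E | χ w = χ z₁} := by simp [hz, hzχ]
  rw [filter_eq_pair_of_card_le_two hcard h₁ h₂ hne hχ, mem_insert, mem_singleton] at hmem
  rcases hmem with rfl | rfl
  · exact ⟨z₂, h₂, hχ, fun v hv₂ hv₁ => hdisj v hv₁ hv₂⟩
  · exact ⟨z₁, h₁, hχ.symm, hdisj⟩

theorem exists_eq_insert_of_card_eq_five {S : Finset α} (hS : #S = 5) {c a b : α} (hc : c ∈ S)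
    (ha : a ∈ S) (hb : b ∈ S) (hca : c ≠ a) (hcb : c ≠ b) (hab : a ≠ b) :
    ∃ d e, S = {c, a, b, d, e} ∧ [c, a, b, d, e].Nodup := by
  have hsub : {c, a, b} ⊆ S := by simp [insert_subset_iff, *]
  have hrest : #(S \ {c, a, b}) = 2 := by
    rw [card_sdiff_of_subset hsub, hS, card_insert_of_notMem (by simp [*]), card_pair hab]
  obtain ⟨d, e, hde, hrest⟩ := card_eq_two.mp hrest
  have hd : d ∈ S \ {c, a, b} := hrest ▸ by simp
  have he : e ∈ S \ {c, a, b} := hrest ▸ by simp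
  simp only [mem_sdiff, mem_insert, mem_singleton, not_or] at hd he
  refine ⟨d, e, ?_, by simp [*]; grind⟩
  rw [← union_sdiff_of_subset hsub, hrest]
  simp only [insert_union, singleton_union]

theorem exists_isPathMatchingColoring {S : Finset α} {χ : Sym2 α → C} {M : Finset C}
    (hS : #S = 5) (hM : #M = 4)
    (hcard : ∀ col, #{z ∈ edgesOn S | χ z = col} = 0 ∨ #{z ∈ edgesOn S | χ z = col} = 2)
    (hmatch : ∀ col ∈ M, ∃ z₁ ∈ edgesOn S, ∃ z₂ ∈ edgesOn S,
      χ z₁ = col ∧ χ z₂ = col ∧ ∀ v ∈ z₁, v ∉ z₂)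
    (hpath : ∀ col ∉ M, (∃ z ∈ edgesOn S, χ z = col) → ∃ z₁ ∈ edgesOn S, ∃ z₂ ∈ edgesOn S,
      z₁ ≠ z₂ ∧ χ z₁ = col ∧ χ z₂ = col ∧ ∃ v ∈ z₁, v ∈ z₂) :
    ∃ c a b d e, IsPathMatchingColoring χ c a b d e := by
  have hcard_le (col) : #{z ∈ edgesOn S | χ z = col} ≤ 2 := by rcases hcard col with h | h <;> omega
  have hcardM : ∀ col ∈ M, #{z ∈ edgesOn S | χ z = col} = 2 := fun col hcol => by
    obtain ⟨z₁, h₁, -, -, hχ₁, -⟩ := hmatch col hcol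
    exact (hcard col).resolve_left (card_ne_zero.mpr ⟨z₁, by simp [h₁, hχ₁]⟩)
  obtain ⟨col, hcolM, hcol, hall⟩ :=
    exists_color_forall_of_card_eq (by rw [card_edgesOn, hS, hM]; rfl) hcard hcardM
  obtain ⟨z₁, h₁, z₂, h₂, hne, hχ₁, hχ₂, c, hc₁, hc₂⟩ := hpath col hcolM hcol
  obtain ⟨a, b, hab, rfl, rfl⟩ := exists_eq_mk_of_mem_of_mem hc₁ hc₂ hne
  have hclass := filter_eq_pair_of_card_le_two (hcard_le _) h₁ h₂ hne (hχ₂.trans hχ₁.symm)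
  rw [mk_mem_edgesOn] at h₁ h₂
  obtain ⟨d, e, rfl, hnd⟩ :=
    exists_eq_insert_of_card_eq_five hS h₁.1 h₁.2.1 h₂.2.1 h₁.2.2 h₂.2.2 hab
  refine ⟨c, a, b, d, e, hnd, hχ₁.trans hχ₂.symm, hcard_le, fun z hz hza hzb => ?_⟩
  rcases hall z hz with hzcol | hzM
  · have : z ∈ {w ∈ edgesOn {c, a, b, d, e} | χ w = χ s(c, a)} := by simp [hz, hzcol, hχ₁]
    simp [hclass, hza, hzb] at this
  · obtain ⟨w₁, hw₁, w₂, hw₂, hχw₁, hχw₂, hdisj⟩ := hmatch _ hzM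
    exact exists_disjoint_of_mem_filter (hcard_le _) hw₁ hw₂ (hχw₂.trans hχw₁.symm) hdisj hz
      hχw₁.symm

end Classification

section Configuration

variable {m : ℕ}

noncomputable def phiSym : Sym2 (Vtx m) → Color m := Sym2.lift ⟨phi, phi_comm⟩

theorem not_isPathMatchingColoring_phiSym [DecidableEq (Color m)] {c a b d e : Vtx m} :
    ¬ IsPathMatchingColoring phiSym c a b d e := by
  intro h
  obtain ⟨hca, hcb, hcd, hce, hab, -, -, -, -, hde⟩ := h.distinct
  rcases h.shape with ⟨h₃, h₄⟩ | ⟨h₃, h₄⟩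
  · exact false_of_phi_pattern hab hca.symm hcd hce hde h.path h.ab_eq_de h₃ h₄
  · exact false_of_phi_pattern hab.symm hcb.symm hcd hce hde h.path.symm h.swap.ab_eq_de h₃ h₄

variable {a b c d e : Vtx m}

theorem card_eq_five_of_distinct5 (h : Distinct5 a b c d e) : #{a, b, c, d, e} = 5 := by
  obtain ⟨hab, hac, had, hae, hbc, hbd, hbe, hcd, hce, hde⟩ := h
  simp [card_insert_of_notMem, *]

theorem mk_mem_edgesOn_of_mem_edgeList (h : Distinct5 a b c d e) {p : Vtx m × Vtx m}
    (hp : p ∈ edgeList a b c d e) : s(p.1, p.2) ∈ edgesOn {a, b, c, d, e} := by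
  obtain ⟨hab, hac, had, hae, hbc, hbd, hbe, hcd, hce, hde⟩ := h
  simp only [edgeList, List.mem_cons, List.not_mem_nil, or_false] at hp
  rcases hp with rfl | rfl | rfl | rfl | rfl | rfl | rfl | rfl | rfl | rfl <;> simp [*]

theorem nodup_map_edgeList (h : Distinct5 a b c d e) :
    ((edgeList a b c d e).map fun p => s(p.1, p.2)).Nodup := by
  obtain ⟨hab, hac, had, hae, hbc, hbd, hbe, hcd, hce, hde⟩ := h
  simp [edgeList]
  grind

theorem toFinset_map_edgeList (h : Distinct5 a b c d e) :
    ((edgeList a b c d e).map fun p => s(p.1, p.2)).toFinset = edgesOn {a, b, c, d, e} := by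
  refine eq_of_subset_of_card_le (fun z hz => ?_) ?_
  · obtain ⟨p, hp, rfl⟩ := List.mem_map.mp (List.mem_toFinset.mp hz)
    exact mk_mem_edgesOn_of_mem_edgeList h hp
  · rw [card_edgesOn, card_eq_five_of_distinct5 h,
      List.toFinset_card_of_nodup (nodup_map_edgeList h)]
    rfl

theorem colorCount_eq_card [DecidableEq (Color m)] (h : Distinct5 a b c d e) (col : Color m) :
    colorCount a b c d e col = #{z ∈ edgesOn {a, b, c, d, e} | phiSym z = col} := by
  rw [← toFinset_map_edgeList h, (nodup_map_edgeList h).card_eq_countP, colorCount,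
    List.countP_map, List.countP_map]
  congr 1
  funext p
  exact decide_eq_decide.mpr Iff.rfl

theorem IsMatchingClass.exists_disjoint (h : Distinct5 a b c d e) {col : Color m}
    (hM : IsMatchingClass a b c d e col) :
    ∃ z₁ ∈ edgesOn {a, b, c, d, e}, ∃ z₂ ∈ edgesOn {a, b, c, d, e},
      phiSym z₁ = col ∧ phiSym z₂ = col ∧ ∀ v ∈ z₁, v ∉ z₂ := by
  obtain ⟨p, hp, q, hq, hχp, hχq, h₁₁, h₁₂, h₂₁, h₂₂⟩ := hM
  refine ⟨_, mk_mem_edgesOn_of_mem_edgeList h hp, _, mk_mem_edgesOn_of_mem_edgeList h hq,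
    hχp, hχq, ?_⟩
  simp [Sym2.mem_iff, *]

theorem IsPathClass.exists_adjacent (h : Distinct5 a b c d e) {col : Color m}
    (hP : IsPathClass a b c d e col) :
    ∃ z₁ ∈ edgesOn {a, b, c, d, e}, ∃ z₂ ∈ edgesOn {a, b, c, d, e},
      z₁ ≠ z₂ ∧ phiSym z₁ = col ∧ phiSym z₂ = col ∧ ∃ v ∈ z₁, v ∈ z₂ := by
  obtain ⟨p, hp, q, hq, hpq, hχp, hχq, hshare⟩ := hP
  refine ⟨_, mk_mem_edgesOn_of_mem_edgeList h hp, _, mk_mem_edgesOn_of_mem_edgeList h hq,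
    fun hpq' => hpq (List.inj_on_of_nodup_map (nodup_map_edgeList h) hp hq hpq'), hχp, hχq, ?_⟩
  rcases hshare with h' | h' | h' | h' <;> simp [Sym2.mem_iff, h']

end Configuration

theorem no_four_matchings_one_path_general (m : ℕ) :
    ¬ ∃ a b c d e : Vtx m, IsConfig22222 a b c d e ∧
      ∃ col₁ col₂ col₃ col₄ : Color m,
        col₁ ≠ col₂ ∧ col₁ ≠ col₃ ∧ col₁ ≠ col₄ ∧
        col₂ ≠ col₃ ∧ col₂ ≠ col₄ ∧ col₃ ≠ col₄ ∧
        IsAttained a b c d e col₁ ∧ IsMatchingClass a b c d e col₁ ∧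
        IsAttained a b c d e col₂ ∧ IsMatchingClass a b c d e col₂ ∧
        IsAttained a b c d e col₃ ∧ IsMatchingClass a b c d e col₃ ∧
        IsAttained a b c d e col₄ ∧ IsMatchingClass a b c d e col₄ ∧
        ∀ col' : Color m, IsAttained a b c d e col' →
          col' ≠ col₁ → col' ≠ col₂ → col' ≠ col₃ → col' ≠ col₄ →
          IsPathClass a b c d e col' := by
  classical
  rintro ⟨a, b, c, d, e, ⟨hdist, hcount⟩, col₁, col₂, col₃, col₄, h₁₂, h₁₃, h₁₄, h₂₃, h₂₄, h₃₄,
    -, hM₁, -, hM₂, -, hM₃, -, hM₄, hpath⟩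
  have hM : #{col₁, col₂, col₃, col₄} = 4 := by simp [card_insert_of_notMem, *]
  obtain ⟨c', a', b', d', e', h⟩ := exists_isPathMatchingColoring (card_eq_five_of_distinct5 hdist)
    hM (fun col => colorCount_eq_card hdist col ▸ hcount col)
    (by
      simp only [mem_insert, mem_singleton, forall_eq_or_imp, forall_eq]
      exact ⟨hM₁.exists_disjoint hdist, hM₂.exists_disjoint hdist, hM₃.exists_disjoint hdist,
        hM₄.exists_disjoint hdist⟩)
    (fun col hcol ⟨z, hz, hχ⟩ => by
      simp only [mem_insert, mem_singleton, not_or] at hcol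
      refine (hpath col ?_ hcol.1 hcol.2.1 hcol.2.2.1 hcol.2.2.2).exists_adjacent hdist
      rw [IsAttained, colorCount_eq_card hdist]
      exact card_ne_zero.mpr ⟨z, by simp [hz, hχ]⟩)
  exact not_isPathMatchingColoring_phiSym h

/-- There is no 2-2-2-2-2 configuration under `φ` in which exactly four color classes
are matchings and the remaining one is a path. -/
theorem no_four_matchings_one_path (m : ℕ) (hm : 0 < m) :
    ¬ ∃ a b c d e : Vtx m, IsConfig22222 a b c d e ∧
      ∃ col₁ col₂ col₃ col₄ : Color m,
        col₁ ≠ col₂ ∧ col₁ ≠ col₃ ∧ col₁ ≠ col₄ ∧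
        col₂ ≠ col₃ ∧ col₂ ≠ col₄ ∧ col₃ ≠ col₄ ∧
        IsAttained a b c d e col₁ ∧ IsMatchingClass a b c d e col₁ ∧
        IsAttained a b c d e col₂ ∧ IsMatchingClass a b c d e col₂ ∧
        IsAttained a b c d e col₃ ∧ IsMatchingClass a b c d e col₃ ∧
        IsAttained a b c d e col₄ ∧ IsMatchingClass a b c d e col₄ ∧
        ∀ col' : Color m, IsAttained a b c d e col' →
          col' ≠ col₁ → col' ≠ col₂ → col' ≠ col₃ → col' ≠ col₄ →
          IsPathClass a b c d e col' :=
  no_four_matchings_one_path_general m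

end CFLS
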